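/- Let L = {X + π(ξ) + ξ : X ∈ 𝔇, ξ ∈ 𝔇⁰} be a Dirac structure of the omni-Lie 2-algebra gl(𝕍) ⊕ 𝕍 with characteristic pair (𝔇, π) (L maximal isotropic and closed under the Courant bracket, 𝔇 = L ∩ (End⁰ ⊕ End¹), π(ξ)·η = −π(η)·ξ on 𝔇⁰). Then the bracket [ξ,η]_{𝔇⁰} := π(ξ)·η on 𝔇⁰ is well defined (independent of the choice of π with π(𝔇⁰) + 𝔇 fixed), takes values in 𝔇⁰, is skew-symmetric, and satisfies the Jacobi identity [[ξ,η]_{𝔇⁰}, θ]_{𝔇⁰} = [ξ,[η,θ]_{𝔇⁰}]_{𝔇⁰} − [η,[ξ,θ]_{𝔇⁰}]_{𝔇⁰} for all ξ, η, θ ∈ 𝔇⁰; hence every Dirac structure induces a strict Lie 2-algebra structure on the 2-sub-vector space 𝔇⁰ of 𝕍. -/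

import Mathlib

/-!
Skewness of `π(ξ)·η` makes the Courant bracket of the sections `π(ξ) + ξ`, `π(η) + η` equal to
their Dorfman bracket `[π ξ, π η] + π(ξ)·η`. Closedness of `L` then gives `π(ξ)·η ∈ 𝔇⁰` and
`[π ξ, π η] ≡ π(π(ξ)·η)` modulo `𝔇`. As `𝔇` annihilates `𝔇⁰` and the action of `gl(𝕍)` on `𝕍`
is a representation, the Jacobi identity follows.
-/

open LinearMap

noncomputable section

namespace Omni

variable {V₀ V₁ : Type*}
  [AddCommGroup V₀] [Module ℝ V₀] [AddCommGroup V₁] [Module ℝ V₁]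

variable (d : V₁ →ₗ[ℝ] V₀)

/-- `End⁰`: pairs `(A₀, A₁)` of endomorphisms with `A₀ ∘ d = d ∘ A₁`. -/
def End0 : Submodule ℝ ((V₀ →ₗ[ℝ] V₀) × (V₁ →ₗ[ℝ] V₁)) where
  carrier := {A | A.1 ∘ₗ d = d ∘ₗ A.2}
  add_mem' := by
    intro a b ha hb
    simp only [Set.mem_setOf_eq] at *
    simp [add_comp, comp_add, ha, hb]
  zero_mem' := by
    simp only [Set.mem_setOf_eq]
    simp
  smul_mem' := by
    intro c a ha
    simp only [Set.mem_setOf_eq] at *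
    simp [smul_comp, comp_smul, ha]

lemma mem_End0 {A : (V₀ →ₗ[ℝ] V₀) × (V₁ →ₗ[ℝ] V₁)} :
    A ∈ End0 d ↔ A.1 ∘ₗ d = d ∘ₗ A.2 := Iff.rfl

/-- Morphism space of `gl(𝕍)`:  `End⁰ ⊕ End¹`. -/
abbrev Gl := ↥(End0 d) × (V₀ →ₗ[ℝ] V₁)

/-- Morphism space of the omni-Lie 2-algebra `gl(𝕍) ⊕ 𝕍`. -/
abbrev E := Gl d × (V₀ × V₁)

/-- `δ : End¹ → End⁰`, `δφ = (d∘φ, φ∘d)`. -/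
def δm (φ : V₀ →ₗ[ℝ] V₁) : End0 d :=
  ⟨(d ∘ₗ φ, φ ∘ₗ d), by
    rw [mem_End0]
    exact (comp_assoc _ _ _).symm⟩

/-- commutator bracket on `End⁰`. -/
def bkt0 (A B : End0 d) : End0 d :=
  ⟨(A.1.1 ∘ₗ B.1.1 - B.1.1 ∘ₗ A.1.1, A.1.2 ∘ₗ B.1.2 - B.1.2 ∘ₗ A.1.2), by
    have hA : A.1.1 ∘ₗ d = d ∘ₗ A.1.2 := A.2
    have hB : B.1.1 ∘ₗ d = d ∘ₗ B.1.2 := B.2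
    rw [mem_End0]
    have ha : ∀ x, A.1.1 (d x) = d (A.1.2 x) := fun x => LinearMap.congr_fun hA x
    have hb : ∀ x, B.1.1 (d x) = d (B.1.2 x) := fun x => LinearMap.congr_fun hB x
    ext m
    simp [ha, hb]⟩

/-- `[A,φ] = A₁ ∘ φ - φ ∘ A₀` for `A ∈ End⁰`, `φ ∈ End¹`. -/
def bktAφ (A : End0 d) (φ : V₀ →ₗ[ℝ] V₁) : V₀ →ₗ[ℝ] V₁ :=
  A.1.2 ∘ₗ φ - φ ∘ₗ A.1.1

/-- `[φ,ψ]_δ = φ∘d∘ψ - ψ∘d∘φ`. -/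
def bktδ (φ ψ : V₀ →ₗ[ℝ] V₁) : V₀ →ₗ[ℝ] V₁ :=
  φ ∘ₗ d ∘ₗ ψ - ψ ∘ₗ d ∘ₗ φ

/-- bracket on the morphism space `End⁰ ⊕ End¹` of `gl(𝕍)`. -/
def bkt (X Y : Gl d) : Gl d :=
  (bkt0 d X.1 Y.1, bktAφ d X.1 Y.2 - bktAφ d Y.1 X.2 + bktδ d X.2 Y.2)

/-- action of `gl(𝕍)` on `𝕍`:  `(A,φ)·(u,m) = (A₀u, A₁m + φ(u+dm))`. -/
def act (X : Gl d) (ξ : V₀ × V₁) : V₀ × V₁ :=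
  (X.1.1.1 ξ.1, X.1.1.2 ξ.2 + X.2 (ξ.1 + d ξ.2))

/-- the `𝕍`-valued pairing on `E`. -/
def pairE (e₁ e₂ : E d) : V₀ × V₁ :=
  (2⁻¹ : ℝ) • (act d e₁.1 e₂.2 + act d e₂.1 e₁.2)

/-- pairing at the level of objects. -/
def pairObj (x y : (End0 d) × V₀) : V₀ :=
  (2⁻¹ : ℝ) • (x.1.1.1 y.2 + y.1.1.1 x.2)

/-- the Courant bracket on `E`. -/
def courant (e₁ e₂ : E d) : E d :=
  (bkt d e₁.1 e₂.1, (2⁻¹ : ℝ) • (act d e₁.1 e₂.2 - act d e₂.1 e₁.2))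

/-- Courant bracket at the level of objects. -/
def courantObj (x y : (End0 d) × V₀) : (End0 d) × V₀ :=
  (bkt0 d x.1 y.1, (2⁻¹ : ℝ) • (x.1.1.1 y.2 - y.1.1.1 x.2))

/-- the Dorfman bracket on `E`. -/
def dorfman (e₁ e₂ : E d) : E d :=
  (bkt d e₁.1 e₂.1, act d e₁.1 e₂.2)

/-- source of a morphism of `gl(𝕍) ⊕ 𝕍`. -/
def sE (e : E d) : (End0 d) × V₀ := (e.1.1, e.2.1)

/-- target of a morphism of `gl(𝕍) ⊕ 𝕍`. -/
def tE (e : E d) : (End0 d) × V₀ := (e.1.1 + δm d e.1.2, e.2.1 + d e.2.2)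

/-- vertical composition of morphisms of `gl(𝕍) ⊕ 𝕍`. -/
def compE (e e' : E d) : E d := ((e.1.1, e.1.2 + e'.1.2), (e.2.1, e.2.2 + e'.2.2))

/-- vertical composition of morphisms of `𝕍`. -/
def compV (x y : V₀ × V₁) : V₀ × V₁ := (x.1, x.2 + y.2)

/-- orthogonal complement w.r.t. the `𝕍`-valued pairing. -/
def perp (L : Set (E d)) : Set (E d) := {e | ∀ l ∈ L, pairE d e l = 0}

/-- bilinear functor data `(F₀, F_a, F_b)` for `𝕍`. -/
structure BilinData where
  F0 : V₀ →ₗ[ℝ] V₀ →ₗ[ℝ] V₀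
  Fa : V₀ →ₗ[ℝ] V₁ →ₗ[ℝ] V₁
  Fb : V₁ →ₗ[ℝ] V₀ →ₗ[ℝ] V₁
  ha : ∀ u n, d (Fa u n) = F0 u (d n)
  hb : ∀ m v, d (Fb m v) = F0 (d m) v
  hc : ∀ m n, Fa (d m) n = Fb m (d n)

/-- `ad_F (u,m) = ((F₀(u,·), F_a(u,·)), F_b(m,·))`. -/
def adF (F : BilinData d) (ξ : V₀ × V₁) : Gl d :=
  (⟨(F.F0 ξ.1, F.Fa ξ.1), by
      rw [mem_End0]
      ext n
      exact (F.ha ξ.1 n).symm⟩, F.Fb ξ.2)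

/-- the graph `G_F = {(ad_F ξ, ξ)}`. -/
def graphF (F : BilinData d) : Set (E d) := {e | ∃ ξ : V₀ × V₁, e = (adF d F ξ, ξ)}

/-- an isomorphism `μ = (μ₀, μ₁, μ₂)` from the Lie 2-algebra `gl(𝕍)` to itself. -/
structure GlIso where
  μ0 : (End0 d) ≃ₗ[ℝ] (End0 d)
  μ1 : (Gl d) ≃ₗ[ℝ] (Gl d)
  hs : ∀ X : Gl d, (μ1 X).1 = μ0 X.1
  ht : ∀ X : Gl d, (μ1 X).1 + δm d (μ1 X).2 = μ0 (X.1 + δm d X.2)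
  hid : ∀ A : End0 d, μ1 (A, 0) = (μ0 A, 0)
  hcomp : ∀ (A : End0 d) (φ φ' : V₀ →ₗ[ℝ] V₁),
    μ1 (A, φ + φ') = ((μ1 (A, φ)).1, (μ1 (A, φ)).2 + (μ1 (A + δm d φ, φ')).2)
  μ2 : (End0 d) →ₗ[ℝ] (End0 d) →ₗ[ℝ] Gl d
  hskew : ∀ A B, μ2 A B = - μ2 B A
  hs2 : ∀ A B, (μ2 A B).1 = μ0 (bkt0 d A B)
  ht2 : ∀ A B, (μ2 A B).1 + δm d (μ2 A B).2 = bkt0 d (μ0 A) (μ0 B)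
  hnat : ∀ (A B : End0 d) (φ ψ : V₀ →ₗ[ℝ] V₁),
    (μ2 A B).2 + (bkt d (μ1 (A, φ)) (μ1 (B, ψ))).2
      = (μ1 (bkt d (A, φ) (B, ψ))).2 + (μ2 (A + δm d φ) (B + δm d ψ)).2
  hcoh : ∀ A B C : End0 d,
    (μ2 (bkt0 d A B) C).2 + (bkt d (μ2 A B) ((μ0 C, 0) : Gl d)).2
      = (μ2 A (bkt0 d B C)).2 + (μ2 B (bkt0 d C A)).2
        + (bkt d ((μ0 A, 0) : Gl d) (μ2 B C)).2
        + (bkt d ((μ0 B, 0) : Gl d) (μ2 C A)).2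

/-- the `μ`-twisted pairing on `E`. -/
def pairμ (μ : GlIso d) (e₁ e₂ : E d) : V₀ × V₁ :=
  (2⁻¹ : ℝ) • (act d (μ.μ1 e₁.1) e₂.2 + act d (μ.μ1 e₂.1) e₁.2)

/-- the `μ`-twisted Courant bracket on `E`. -/
def courantμ (μ : GlIso d) (e₁ e₂ : E d) : E d :=
  (bkt d e₁.1 e₂.1, (2⁻¹ : ℝ) • (act d (μ.μ1 e₁.1) e₂.2 - act d (μ.μ1 e₂.1) e₁.2))

/-- orthogonal complement w.r.t. the `μ`-twisted pairing. -/
def perpμ (μ : GlIso d) (L : Set (E d)) : Set (E d) := {e | ∀ l ∈ L, pairμ d μ e l = 0}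

/-- the `μ`-twisted Dorfman bracket at the level of objects. -/
def dorfObjμ (μ : GlIso d) (x y : (End0 d) × V₀) : (End0 d) × V₀ :=
  (bkt0 d x.1 y.1, (μ.μ0 x.1).1.1 y.2)

end Omni

end

namespace Omni

variable {V₀ V₁ : Type*} [AddCommGroup V₀] [Module ℝ V₀] [AddCommGroup V₁] [Module ℝ V₁]
  {d : V₁ →ₗ[ℝ] V₀}

lemma act_sub (X Y : Gl d) (ξ : V₀ × V₁) :
    act d (X - Y) ξ = act d X ξ - act d Y ξ := by
  simp only [act, Prod.fst_sub, AddSubgroupClass.coe_sub, LinearMap.sub_apply, Prod.snd_sub,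
    map_add, Prod.mk_sub_mk, Prod.ext_iff, true_and]
  abel

lemma act_eq_of_act_sub_eq_zero {X Y : Gl d} {ξ : V₀ × V₁} (h : act d (X - Y) ξ = 0) :
    act d X ξ = act d Y ξ :=
  sub_eq_zero.mp (act_sub X Y ξ ▸ h)

lemma act_bkt (X Y : Gl d) (ξ : V₀ × V₁) :
    act d (bkt d X Y) ξ = act d X (act d Y ξ) - act d Y (act d X ξ) := by
  obtain ⟨⟨⟨A₀, A₁⟩, hA⟩, φ⟩ := X
  obtain ⟨⟨⟨B₀, B₁⟩, hB⟩, ψ⟩ := Y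
  have ha : ∀ x, A₀ (d x) = d (A₁ x) := LinearMap.congr_fun hA
  have hb : ∀ x, B₀ (d x) = d (B₁ x) := LinearMap.congr_fun hB
  simp only [act, bkt, bkt0, bktAφ, bktδ, LinearMap.sub_apply, coe_comp, Function.comp_apply,
    LinearMap.add_apply, map_add, ha, hb, Prod.mk_sub_mk, Prod.ext_iff, true_and]
  abel

lemma courant_eq_dorfman {e₁ e₂ : E d} (h : act d e₂.1 e₁.2 = -act d e₁.1 e₂.2) :
    courant d e₁ e₂ = dorfman d e₁ e₂ := by
  rw [courant, dorfman, h, sub_neg_eq_add, ← two_smul ℝ, smul_smul]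
  norm_num

def ofCharPair (𝔇 : Set (Gl d)) (π : V₀ × V₁ → Gl d) (D0 : Set (V₀ × V₁)) : Set (E d) :=
  {e | ∃ X ∈ 𝔇, ∃ ξ ∈ D0, e = (X + π ξ, ξ)}

lemma mem_ofCharPair_iff {𝔇 : Set (Gl d)} {π : V₀ × V₁ → Gl d} {D0 : Set (V₀ × V₁)}
    {X : Gl d} {ξ : V₀ × V₁} :
    ((X, ξ) : E d) ∈ ofCharPair 𝔇 π D0 ↔ ξ ∈ D0 ∧ X - π ξ ∈ 𝔇 := by
  constructor
  · rintro ⟨Y, hY, η, hη, h⟩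
    obtain ⟨rfl, rfl⟩ := Prod.mk.inj h
    simpa [hη] using hY
  · rintro ⟨hξ, hX⟩
    exact ⟨X - π ξ, hX, ξ, hξ, by simp⟩

end Omni

open Omni in
theorem dirac_induces_strict_lie2_general {V₀ V₁ : Type*} [AddCommGroup V₀] [Module ℝ V₀] [AddCommGroup V₁] [Module ℝ V₁]
    (d : V₁ →ₗ[ℝ] V₀)
    (𝔇 : Submodule ℝ (Gl d)) (π : (V₀ × V₁) →ₗ[ℝ] Gl d)
    (D0 : Set (V₀ × V₁)) (hD0 : D0 = {ξ : V₀ × V₁ | ∀ X ∈ 𝔇, act d X ξ = 0})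
    (hskew : ∀ ξ ∈ D0, ∀ η ∈ D0, act d (π ξ) η = - act d (π η) ξ)
    (L : Set (E d))
    (hL : L = {e : E d | ∃ X ∈ 𝔇, ∃ ξ ∈ D0, e = (X + π ξ, ξ)})
    (hclosed : ∀ e ∈ L, ∀ e' ∈ L, courant d e e' ∈ L) :
    -- well-definedness: independence of the choice of π
    (∀ π' : (V₀ × V₁) →ₗ[ℝ] Gl d, (∀ ξ ∈ D0, π ξ - π' ξ ∈ 𝔇) →
      ∀ ξ ∈ D0, ∀ η ∈ D0, act d (π ξ) η = act d (π' ξ) η) ∧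
    -- the bracket takes values in 𝔇⁰
    (∀ ξ ∈ D0, ∀ η ∈ D0, act d (π ξ) η ∈ D0) ∧
    -- skew-symmetry
    (∀ ξ ∈ D0, ∀ η ∈ D0, act d (π ξ) η = - act d (π η) ξ) ∧
    -- Jacobi identity
    (∀ ξ ∈ D0, ∀ η ∈ D0, ∀ θ ∈ D0,
      act d (π (act d (π ξ) η)) θ
        = act d (π ξ) (act d (π η) θ) - act d (π η) (act d (π ξ) θ)) := by
  change L = ofCharPair 𝔇 π D0 at hL
  have hannihilator : ∀ η ∈ D0, ∀ X ∈ 𝔇, act d X η = 0 := by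
    rw [hD0]
    exact fun η hη => hη
  have hact_congr : ∀ {X Y : Gl d}, X - Y ∈ 𝔇 → ∀ η ∈ D0, act d X η = act d Y η :=
    fun hXY η hη => act_eq_of_act_sub_eq_zero (hannihilator η hη _ hXY)
  have hsection : ∀ ξ ∈ D0, ((π ξ, ξ) : E d) ∈ L := fun ξ hξ =>
    hL ▸ mem_ofCharPair_iff.mpr ⟨hξ, by simp⟩
  have hdorfman : ∀ ξ ∈ D0, ∀ η ∈ D0,
      act d (π ξ) η ∈ D0 ∧ bkt d (π ξ) (π η) - π (act d (π ξ) η) ∈ 𝔇 := by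
    intro ξ hξ η hη
    have h := hclosed _ (hsection ξ hξ) _ (hsection η hη)
    rwa [courant_eq_dorfman (hskew η hη ξ hξ), hL, dorfman, mem_ofCharPair_iff] at h
  refine ⟨fun π' hπ' ξ hξ η hη => hact_congr (hπ' ξ hξ) η hη,
    fun ξ hξ η hη => (hdorfman ξ hξ η hη).1, hskew, ?_⟩
  intro ξ hξ η hη θ hθ
  rw [← act_bkt, hact_congr (hdorfman ξ hξ η hη).2 θ hθ]

open Omni in
/-- A Dirac structure `L` with characteristic pair `(𝔇, π)` induces a strict Lie
2-algebra structure `[ξ,η] := π(ξ)·η` on `𝔇⁰`: the bracket is independent of the choice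
of `π`, takes values in `𝔇⁰`, is skew-symmetric, and satisfies the Jacobi identity. -/
theorem dirac_induces_strict_lie2 {V₀ V₁ : Type*} [AddCommGroup V₀] [Module ℝ V₀] [AddCommGroup V₁] [Module ℝ V₁]
    [FiniteDimensional ℝ V₀] [FiniteDimensional ℝ V₁]
    (d : V₁ →ₗ[ℝ] V₀)
    (𝔇 : Submodule ℝ (Gl d)) (π : (V₀ × V₁) →ₗ[ℝ] Gl d)
    (D0 : Set (V₀ × V₁)) (hD0 : D0 = {ξ : V₀ × V₁ | ∀ X ∈ 𝔇, act d X ξ = 0})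
    (hskew : ∀ ξ ∈ D0, ∀ η ∈ D0, act d (π ξ) η = - act d (π η) ξ)
    (L : Set (E d))
    (hL : L = {e : E d | ∃ X ∈ 𝔇, ∃ ξ ∈ D0, e = (X + π ξ, ξ)})
    (hD : ∀ X : Gl d, ((X, (0 : V₀ × V₁)) : E d) ∈ L ↔ X ∈ 𝔇)
    (hmax : L = perp d L)
    (hclosed : ∀ e ∈ L, ∀ e' ∈ L, courant d e e' ∈ L) :
    -- well-definedness: independence of the choice of π
    (∀ π' : (V₀ × V₁) →ₗ[ℝ] Gl d, (∀ ξ ∈ D0, π ξ - π' ξ ∈ 𝔇) →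
      ∀ ξ ∈ D0, ∀ η ∈ D0, act d (π ξ) η = act d (π' ξ) η) ∧
    -- the bracket takes values in 𝔇⁰
    (∀ ξ ∈ D0, ∀ η ∈ D0, act d (π ξ) η ∈ D0) ∧
    -- skew-symmetry
    (∀ ξ ∈ D0, ∀ η ∈ D0, act d (π ξ) η = - act d (π η) ξ) ∧
    -- Jacobi identity
    (∀ ξ ∈ D0, ∀ η ∈ D0, ∀ θ ∈ D0,
      act d (π (act d (π ξ) η)) θ
        = act d (π ξ) (act d (π η) θ) - act d (π η) (act d (π ξ) θ)) :=
  dirac_induces_strict_lie2_general d 𝔇 π D0 hD0 hskew L hL hclosed
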